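/- arXiv:1601.01493 — 2 statements merged into one kernel-verified Lean document; each statement's English description precedes it below -/
import Mathlib

section
/- For every k ≥ 2, every finite k-uniform hypergraph F, and every q ≥ 2, there exists a finite k-uniform hypergraph G such that every q-coloring of the edges of G contains an induced monochromatic copy of F; that is, the induced Ramsey number r_ind(F;q) is finite. -/
open Finset

/-- `E` is a `k`-uniform edge set: every edge has exactly `k` vertices. -/
def IsKUniform (k : ℕ) {V : Type*} (E : Finset (Finset V)) : Prop :=
  ∀ e ∈ E, e.card = k

/-- The coloring `χ` of the `k`-uniform hypergraph `G` on `Fin n` contains an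
induced monochromatic copy of `F`. -/
def HasIndMonoCopy (k : ℕ) {t n q : ℕ} (F : Finset (Finset (Fin t)))
    (G : Finset (Finset (Fin n))) (χ : Finset (Fin n) → Fin q) : Prop :=
  ∃ (f : Fin t → Fin n) (c : Fin q), Function.Injective f ∧
    (∀ s : Finset (Fin t), s.card = k → (s ∈ F ↔ s.image f ∈ G)) ∧
    ∀ e ∈ F, χ (e.image f) = c

/-!
The partite construction of Nešetřil and Rödl. Take `T` so large that every coloring of the
`k`-subsets of `Fin T` has a monochromatic `t`-subset (Ramsey's theorem, via Erdős–Rado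
end-homogeneous sets), and start from the `T`-partite hypergraph carrying one copy of `F` on every
`t`-set of parts. Then treat the `k`-sets `K` of parts one at a time: form the Hales–Jewett cube
over the edges with parts `K`; every combinatorial line spans a copy of these edges in the cube,
which is completed, with fresh vertices, to a copy of the whole current hypergraph. A
monochromatic line yields an induced copy of the previous stage whose edges with parts `K` all
have the same color. After all `K`, the color of an edge of the initial hypergraph depends only on
its set of parts, and Ramsey's theorem for the parts gives a `t`-set of parts whose copy of `F` is
monochromatic. It is induced because every embedding in the construction is.
-/

universe u

section ErdosRado

variable {α C : Type*} [LinearOrder α] (κ : Finset α → C) (k : ℕ)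

def EndHomogeneousOn (A Y : Finset α) : Prop :=
  ∀ s ⊆ A, #s = k → ∀ x ∈ Y, ∀ y ∈ Y, (∀ i ∈ s, i < x) → (∀ i ∈ s, i < y) →
    κ (insert x s) = κ (insert y s)

/-- Each greedy step of `EndHomogeneousOn.exists_insert` keeps the most frequent of the
`c ^ 2 ^ (a + 1)` color patterns over the subsets of the current set of size `a + 1`. -/
def erdosRadoBound (c : ℕ) : ℕ → ℕ → ℕ
  | _, 0 => 0
  | a, n + 1 => c ^ 2 ^ (a + 1) * erdosRadoBound c (a + 1) n + 1

variable {κ k}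

lemma EndHomogeneousOn.mono {A A' Y Y' : Finset α} (h : EndHomogeneousOn κ k A Y) (hA : A' ⊆ A)
    (hY : Y' ⊆ Y) : EndHomogeneousOn κ k A' Y' :=
  fun s hs hsk x hx y hy => h s (hs.trans hA) hsk x (hY hx) y (hY hy)

lemma EndHomogeneousOn.extend {A X X' : Finset α} {x : α}
    (hAX : ∀ a ∈ A, ∀ y ∈ X, a < y) (hA : EndHomogeneousOn κ k A (A ∪ X)) (hx : x ∈ X)
    (hX' : X' ⊆ X) (hxX' : ∀ y ∈ X', x < y)
    (hpattern : ∀ y ∈ X', ∀ z ∈ X', ∀ s ⊆ insert x A, κ (insert y s) = κ (insert z s)) :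
    EndHomogeneousOn κ k (insert x A) (insert x A ∪ X') := by
  intro s hs hsk y hy z hz hsy hsz
  by_cases hxs : x ∈ s
  · have hmem : ∀ y ∈ insert x A ∪ X', x < y → y ∈ X' := by
      intro y hy hxy
      simp only [mem_union, mem_insert] at hy
      rcases hy with (rfl | hyA) | hyX'
      · exact absurd hxy (lt_irrefl _)
      · exact absurd (hAX y hyA x hx) hxy.asymm
      · exact hyX'
    exact hpattern y (hmem y hy (hsy x hxs)) z (hmem z hz (hsz x hxs)) s hs
  · have hsA : s ⊆ A := fun i hi =>
      (mem_insert.1 (hs hi)).resolve_left fun h => hxs (h ▸ hi)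
    refine hA.mono hsA ?_ s subset_rfl hsk y hy z hz hsy hsz
    rw [insert_union]
    exact insert_subset (mem_union_right _ hx) (union_subset_union_right hX')

/-- The least element `x` of `X` joins `A`; of the rest of `X` we keep the largest class of
elements `y` with the same color pattern `s ↦ κ (insert y s)` on the subsets `s ⊆ insert x A`. -/
lemma EndHomogeneousOn.exists_insert [Fintype C] {N : ℕ} {A X : Finset α}
    (hAX : ∀ a ∈ A, ∀ x ∈ X, a < x) (hA : EndHomogeneousOn κ k A (A ∪ X))
    (hX : Fintype.card C ^ 2 ^ (#A + 1) * N < #X) :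
    ∃ x ∈ X, x ∉ A ∧ ∃ X' ⊆ X.erase x, N ≤ #X' ∧ (∀ a ∈ insert x A, ∀ y ∈ X', a < y) ∧
      EndHomogeneousOn κ k (insert x A) (insert x A ∪ X') := by
  classical
  have hXne : X.Nonempty := card_pos.1 (by omega)
  set x := X.min' hXne
  have hxX : x ∈ X := X.min'_mem hXne
  have hxA : x ∉ A := fun h => (hAX x h x hxX).false
  let pattern : α → (insert x A).powerset → C := fun y s => κ (insert y s)
  have hcard : #(univ : Finset ((insert x A).powerset → C)) = Fintype.card C ^ 2 ^ (#A + 1) := by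
    simp [card_insert_of_notMem hxA]
  obtain ⟨p, -, hp⟩ := exists_lt_card_fiber_of_mul_lt_card_of_maps_to
    (f := pattern) (fun y _ => mem_univ _) (hcard ▸ hX)
  set X' := {y ∈ X | pattern y = p}.erase x
  have hX'X : X' ⊆ X.erase x := erase_subset_erase _ (filter_subset _ _)
  have hxX' : ∀ y ∈ X', x < y := fun y hy => X.min'_lt_of_mem_erase_min' hXne (hX'X hy)
  have hpattern : ∀ y ∈ X', pattern y = p := fun y hy => (mem_filter.1 (mem_of_mem_erase hy)).2
  refine ⟨x, hxX, hxA, X', hX'X, ?_, ?_, hA.extend hAX hxX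
    (hX'X.trans (erase_subset _ _)) hxX' fun y hy z hz s hs =>
      congrFun ((hpattern y hy).trans (hpattern z hz).symm) ⟨s, mem_powerset.2 hs⟩⟩
  · have : #{y ∈ X | pattern y = p} - 1 ≤ #X' := pred_card_le_card_erase
    omega
  · intro a ha y hy
    rcases mem_insert.1 ha with rfl | ha
    · exact hxX' y hy
    · exact hAX a ha y (mem_of_mem_erase (hX'X hy))

lemma EndHomogeneousOn.exists_subset [Fintype C] (n : ℕ) {A X : Finset α}
    (hAX : ∀ a ∈ A, ∀ x ∈ X, a < x) (hA : EndHomogeneousOn κ k A (A ∪ X))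
    (hX : erdosRadoBound (Fintype.card C) #A n ≤ #X) :
    ∃ S ⊆ X, #S = n ∧ EndHomogeneousOn κ k (A ∪ S) (A ∪ S) := by
  induction n generalizing A X with
  | zero =>
    exact ⟨∅, empty_subset _, card_empty, by simpa using hA.mono subset_rfl subset_union_left⟩
  | succ n ih =>
    obtain ⟨x, hxX, hxA, X', hX', hNX', hAX', hA'⟩ :=
      hA.exists_insert hAX (N := erdosRadoBound (Fintype.card C) (#A + 1) n)
        (by rw [erdosRadoBound] at hX; omega)
    obtain ⟨S, hSX', rfl, hS⟩ := ih hAX' hA' (by rwa [card_insert_of_notMem hxA])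
    have hxS : x ∉ S := fun h => notMem_erase x X (hX' (hSX' h))
    refine ⟨insert x S, insert_subset hxX ((hSX'.trans hX').trans (erase_subset _ _)),
      card_insert_of_notMem hxS, ?_⟩
    rwa [union_insert, ← insert_union]

lemma EndHomogeneousOn.apply_eq_insert_max' {A e : Finset α} (hA : EndHomogeneousOn κ k A A)
    (hAne : A.Nonempty) (he : e ⊆ A.erase (A.max' hAne)) (hene : e.Nonempty) (hek : #e = k + 1) :
    κ e = κ (insert (A.max' hAne) (e.erase (e.max' hene))) := by
  have hme := e.max'_mem hene
  have hs : e.erase (e.max' hene) ⊆ A.erase (A.max' hAne) := (erase_subset _ _).trans he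
  calc κ e = κ (insert (e.max' hene) (e.erase (e.max' hene))) := by rw [insert_erase hme]
    _ = _ := hA _ (hs.trans (erase_subset _ _)) (by rw [card_erase_of_mem hme, hek]; rfl)
      _ (mem_of_mem_erase (he hme)) _ (A.max'_mem hAne)
      (fun _ hi => e.lt_max'_of_mem_erase_max' hene hi)
      (fun _ hi => A.lt_max'_of_mem_erase_max' hAne (hs hi))

end ErdosRado

theorem exists_bound_mono_subset (C : Type*) [Fintype C] {k : ℕ} (hk : 1 ≤ k) (t : ℕ) :
    ∃ M, ∀ {α : Type u} [LinearOrder α] (X : Finset α) (κ : Finset α → C), M ≤ #X →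
      ∃ S ⊆ X, #S = t ∧ ∃ c, ∀ e ⊆ S, #e = k → κ e = c := by
  induction k, hk using Nat.le_induction generalizing t with
  | base =>
    refine ⟨Fintype.card C * t, fun X κ hX => ?_⟩
    classical
    obtain ⟨c, -, hc⟩ := exists_le_card_fiber_of_mul_le_card_of_maps_to
      (f := fun x => κ {x}) (fun x _ => mem_univ _) ⟨κ ∅, mem_univ _⟩ (by simpa using hX)
    obtain ⟨S, hS, rfl⟩ := exists_subset_card_eq hc
    refine ⟨S, hS.trans (filter_subset _ _), rfl, c, fun e he he1 => ?_⟩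
    obtain ⟨x, rfl⟩ := card_eq_one.1 he1
    exact (mem_filter.1 (hS (he (mem_singleton_self x)))).2
  | succ k hk ih =>
    obtain ⟨M, hM⟩ := ih t
    refine ⟨erdosRadoBound (Fintype.card C) 0 (M + 1), fun X κ hX => ?_⟩
    classical
    have hempty : EndHomogeneousOn κ k ∅ (∅ ∪ X) := by
      intro s hs hsk
      rw [subset_empty.1 hs, card_empty] at hsk
      omega
    obtain ⟨A, hAX, hAcard, hA⟩ := hempty.exists_subset (M + 1) (by simp) (by simpa using hX)
    rw [empty_union] at hA
    have hAne : A.Nonempty := card_pos.1 (by omega)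
    obtain ⟨S, hS, hScard, c, hc⟩ := hM (A.erase (A.max' hAne)) (κ ∘ insert (A.max' hAne))
      (by rw [card_erase_of_mem (A.max'_mem hAne)]; omega)
    refine ⟨S, hS.trans ((erase_subset _ _).trans hAX), hScard, c, fun e he hek => ?_⟩
    have hene : e.Nonempty := card_pos.1 (by omega)
    rw [hA.apply_eq_insert_max' hAne (he.trans hS) hene hek]
    exact hc _ ((erase_subset _ _).trans he) (by rw [card_erase_of_mem (e.max'_mem hene), hek]; rfl)

namespace Combinatorics.Line

instance {α ι : Type*} [DecidableEq α] [Fintype ι] : DecidableEq (Line α ι) :=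
  fun l m => decidable_of_iff (l.idxFun = m.idxFun) Line.ext_iff.symm

noncomputable instance {α ι : Type*} [Fintype α] [DecidableEq α] [Fintype ι] [DecidableEq ι] :
    Fintype (Line α ι) :=
  Fintype.ofInjective idxFun fun _ _ => Line.ext

end Combinatorics.Line

open Combinatorics

structure PartiteHypergraph (T k : ℕ) where
  V : Type
  [fintype : Fintype V]
  [decidableEq : DecidableEq V]
  part : V → Fin T
  edges : Finset (Finset V)
  isKUniform : IsKUniform k edges
  injOn_part : ∀ e ∈ edges, Set.InjOn part e

attribute [instance] PartiteHypergraph.fintype PartiteHypergraph.decidableEq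

namespace PartiteHypergraph

variable {T k : ℕ}

def parts (P : PartiteHypergraph T k) (e : Finset P.V) : Finset (Fin T) := e.image P.part

lemma card_parts (P : PartiteHypergraph T k) {e : Finset P.V} (he : e ∈ P.edges) :
    #(P.parts e) = k := by
  rw [parts, card_image_of_injOn (P.injOn_part e he), P.isKUniform e he]

structure Embedding (P Q : PartiteHypergraph T k) where
  toFun : P.V → Q.V
  injective : Function.Injective toFun
  part_toFun : ∀ v, Q.part (toFun v) = P.part v
  mem_edges_iff : ∀ s : Finset P.V, s ∈ P.edges ↔ s.image toFun ∈ Q.edges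

namespace Embedding

variable {P Q R : PartiteHypergraph T k}

def refl (P : PartiteHypergraph T k) : Embedding P P :=
  ⟨id, Function.injective_id, fun _ => rfl, by simp⟩

def trans (f : Embedding P Q) (g : Embedding Q R) : Embedding P R :=
  ⟨g.toFun ∘ f.toFun, g.injective.comp f.injective,
    fun v => by rw [Function.comp_apply, g.part_toFun, f.part_toFun],
    fun s => by rw [f.mem_edges_iff, g.mem_edges_iff, image_image]⟩

lemma parts_image (f : Embedding P Q) (e : Finset P.V) : Q.parts (e.image f.toFun) = P.parts e := by
  rw [parts, parts, image_image]
  exact image_congr fun v _ => f.part_toFun v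

end Embedding

section Amalgam

variable (R : PartiteHypergraph T k) (K : Finset (Fin T))

/-- The alphabet of the Hales–Jewett cube: the edges with parts `K`, listed part by part. -/
abbrev Transversal : Type :=
  {x : K → R.V // (∀ i, R.part (x i) = i) ∧ univ.image x ∈ R.edges}

variable {R K} in
lemma exists_transversal {e : Finset R.V} (he : e ∈ R.edges) (hK : R.parts e = K) :
    ∃ x : R.Transversal K, univ.image x.1 = e := by
  have hex : ∀ i : K, ∃ v ∈ e, R.part v = i := fun i => mem_image.1 (hK ▸ i.2)
  choose x hxe hx using hex
  have hxe_eq : univ.image x = e := by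
    refine (image_subset_iff.2 fun i _ => hxe i).antisymm fun v hv => mem_image.2
      ⟨⟨R.part v, hK ▸ mem_image_of_mem _ hv⟩, mem_univ _, ?_⟩
    exact R.injOn_part e he (hxe _) hv (hx _)
  exact ⟨⟨x, hx, hxe_eq ▸ he⟩, hxe_eq⟩

variable (ι : Type)

/-- A cube vertex `(i, x)` lies in part `i`. The copy of `R` attached to a line `l` uses cube
vertices in the parts `K` and the fresh vertices `(l, v)` in the other parts. -/
abbrev AmalgamVertex : Type := (Fin T × (ι → R.V)) ⊕ (Line (R.Transversal K) ι × R.V)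

variable {R K ι}

def amalgamMap (l : Line (R.Transversal K) ι) (v : R.V) : R.AmalgamVertex K ι :=
  if hv : R.part v ∈ K then .inl (R.part v, fun j => (l.idxFun j).elim v fun x => x.1 ⟨_, hv⟩)
  else .inr (l, v)

def amalgamProj (j : ι) : R.AmalgamVertex K ι → R.V := Sum.elim (fun p => p.2 j) Prod.snd

def amalgamPart : R.AmalgamVertex K ι → Fin T := Sum.elim Prod.fst (R.part ∘ Prod.snd)

lemma amalgamPart_amalgamMap (l : Line (R.Transversal K) ι) (v : R.V) :
    amalgamPart (amalgamMap l v) = R.part v := by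
  unfold amalgamMap
  split_ifs <;> rfl

lemma amalgamMap_eq_inr {l l' : Line (R.Transversal K) ι} {u v : R.V}
    (h : amalgamMap l v = .inr (l', u)) : l = l' ∧ v = u := by
  unfold amalgamMap at h
  split_ifs at h
  simpa [eq_comm] using h

lemma leftInverse_amalgamProj {l : Line (R.Transversal K) ι} {j : ι} (hj : l.idxFun j = none) :
    Function.LeftInverse (amalgamProj j) (amalgamMap l) := by
  intro v
  unfold amalgamMap
  split_ifs <;> simp [amalgamProj, hj]

lemma amalgamMap_injective (l : Line (R.Transversal K) ι) : Function.Injective (amalgamMap l) :=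
  (leftInverse_amalgamProj l.proper.choose_spec).injective

lemma amalgamMap_of_notMem {l : Line (R.Transversal K) ι} {v : R.V} (hv : R.part v ∉ K) :
    amalgamMap l v = .inr (l, v) :=
  dif_neg hv

variable [Fintype ι]

-- Named, since the unfolded instance exceeds `synthInstance.maxSize` inside `Finset` images.
instance : DecidableEq (R.AmalgamVertex K ι) := inferInstance

variable (R K ι) in
def cubeEdge (w : ι → R.Transversal K) : Finset (Fin T × (ι → R.V)) :=
  univ.image fun i : K => (i.1, fun j => (w j).1 i)

lemma image_apply_cubeEdge (w : ι → R.Transversal K) (j : ι) :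
    (R.cubeEdge K ι w).image (fun p => p.2 j) = univ.image (w j).1 := by
  simp [cubeEdge, image_image, Function.comp_def]

lemma image_amalgamMap (l : Line (R.Transversal K) ι) (x : R.Transversal K) :
    (univ.image x.1).image (amalgamMap l) = (R.cubeEdge K ι (l x)).image .inl := by
  simp only [cubeEdge, image_image]
  refine image_congr fun i _ => ?_
  have hi : R.part (x.1 i) ∈ K := x.2.1 i ▸ i.2
  have hi' : (⟨R.part (x.1 i), hi⟩ : K) = i := Subtype.ext (x.2.1 i)
  rw [Function.comp_apply, amalgamMap, dif_pos hi, hi']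
  refine congrArg Sum.inl (Prod.ext (x.2.1 i) (funext fun j => ?_))
  change (l.idxFun j).elim _ _ = ((l.idxFun j).getD x).1 i
  cases l.idxFun j <;> rfl

lemma card_cubeEdge (w : ι → R.Transversal K) : #(R.cubeEdge K ι w) = #K := by
  rw [cubeEdge, card_image_of_injective _ fun i i' h => Subtype.ext (congrArg Prod.fst h)]
  simp

lemma injOn_fst_cubeEdge (w : ι → R.Transversal K) :
    Set.InjOn Prod.fst (R.cubeEdge K ι w : Set (Fin T × (ι → R.V))) := by
  rintro _ hp _ hp' h
  obtain ⟨i, -, rfl⟩ := mem_image.1 hp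
  obtain ⟨i', -, rfl⟩ := mem_image.1 hp'
  obtain rfl : i = i' := Subtype.ext h
  rfl

variable [DecidableEq ι]

variable (R K ι) in
noncomputable def amalgamEdges : Finset (Finset (R.AmalgamVertex K ι)) :=
  univ.image (fun w => (R.cubeEdge K ι w).image .inl) ∪
    univ.biUnion fun l => {e ∈ R.edges | ¬ R.parts e ⊆ K}.image (image (amalgamMap l))

lemma mem_amalgamEdges {s : Finset (R.AmalgamVertex K ι)} :
    s ∈ R.amalgamEdges K ι ↔ (∃ w, (R.cubeEdge K ι w).image .inl = s) ∨
      ∃ l, ∃ e ∈ R.edges, ¬ R.parts e ⊆ K ∧ e.image (amalgamMap l) = s := by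
  simp [amalgamEdges, and_assoc]

variable (R K ι) in
noncomputable def amalgam (hK : #K = k) : PartiteHypergraph T k where
  V := R.AmalgamVertex K ι
  part := amalgamPart
  edges := R.amalgamEdges K ι
  isKUniform := by
    intro s hs
    rcases mem_amalgamEdges.1 hs with ⟨w, rfl⟩ | ⟨l, e, he, -, rfl⟩
    · rw [card_image_of_injective _ Sum.inl_injective, card_cubeEdge, hK]
    · rw [card_image_of_injective _ (amalgamMap_injective l), R.isKUniform e he]
  injOn_part := by
    intro s hs
    rcases mem_amalgamEdges.1 hs with ⟨w, rfl⟩ | ⟨l, e, he, -, rfl⟩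
    · rw [coe_image]
      exact Set.InjOn.image_of_comp (g := amalgamPart) (f := Sum.inl) (injOn_fst_cubeEdge w)
    · rw [coe_image]
      refine Set.InjOn.image_of_comp ?_
      simpa only [Function.comp_def, amalgamPart_amalgamMap] using R.injOn_part e he

variable {hK : #K = k}

lemma image_amalgamMap_mem_edges (l : Line (R.Transversal K) ι) {s : Finset R.V}
    (hs : s ∈ R.edges) : s.image (amalgamMap l) ∈ (R.amalgam K ι hK).edges := by
  refine mem_amalgamEdges.2 ?_
  by_cases hsK : R.parts s ⊆ K
  · have hsK : R.parts s = K := eq_of_subset_of_card_le hsK (by rw [R.card_parts hs, hK])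
    obtain ⟨x, rfl⟩ := exists_transversal hs hsK
    exact .inl ⟨l x, (image_amalgamMap l x).symm⟩
  · exact .inr ⟨l, s, hs, hsK, rfl⟩

lemma mem_edges_of_image_amalgamMap_mem (l : Line (R.Transversal K) ι) {s : Finset R.V}
    (hs : s.image (amalgamMap l) ∈ (R.amalgam K ι hK).edges) : s ∈ R.edges := by
  rcases mem_amalgamEdges.1 hs with ⟨w, hw⟩ | ⟨l', e, he, heK, hl'⟩
  · obtain ⟨j, hj⟩ := l.proper
    have hs : s = univ.image (w j).1 :=
      calc s = (s.image (amalgamMap l)).image (amalgamProj j) := by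
            rw [image_image, (leftInverse_amalgamProj hj).comp_eq_id, image_id]
        _ = univ.image (w j).1 := by
            rw [← hw, image_image]
            exact image_apply_cubeEdge w j
    exact hs ▸ (w j).2.2
  · obtain ⟨i, hie, hiK⟩ := not_subset.1 heK
    obtain ⟨u, hu, rfl⟩ := mem_image.1 hie
    obtain ⟨v, -, hv⟩ := mem_image.1 (hl' ▸ mem_image_of_mem (amalgamMap l') hu)
    obtain ⟨rfl, -⟩ := amalgamMap_eq_inr (hv.trans (amalgamMap_of_notMem hiK))
    rwa [← image_injective (amalgamMap_injective l) hl']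

variable (hK) in
def amalgamEmbedding (l : Line (R.Transversal K) ι) : Embedding R (R.amalgam K ι hK) where
  toFun := amalgamMap l
  injective := amalgamMap_injective l
  part_toFun := amalgamPart_amalgamMap l
  mem_edges_iff _ := ⟨image_amalgamMap_mem_edges l, mem_edges_of_image_amalgamMap_mem l⟩

end Amalgam

theorem exists_embedding_mono_of_parts_eq {C : Type*} [Finite C] (R : PartiteHypergraph T k)
    (K : Finset (Fin T)) :
    ∃ Q : PartiteHypergraph T k, ∀ χ : Finset Q.V → C, ∃ (f : Embedding R Q) (c : C),
      ∀ e ∈ R.edges, R.parts e = K → χ (e.image f.toFun) = c := by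
  by_cases hR : IsEmpty (R.Transversal K)
  · refine ⟨R, fun χ => ⟨.refl R, χ ∅, fun e he heK => ?_⟩⟩
    exact hR.elim (exists_transversal he heK).choose
  obtain ⟨x⟩ := not_isEmpty_iff.1 hR
  have hK : #K = k := by
    have hx : Function.Injective x.1 := fun i i' h =>
      Subtype.ext ((x.2.1 i).symm.trans ((congrArg R.part h).trans (x.2.1 i')))
    rw [← R.isKUniform _ x.2.2, card_image_of_injective _ hx, card_univ, Fintype.card_coe]
  obtain ⟨ι, _, hι⟩ := Line.exists_mono_in_high_dimension (R.Transversal K) C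
  classical
  refine ⟨R.amalgam K ι hK, fun χ => ?_⟩
  obtain ⟨l, c, hl⟩ := hι fun w => χ ((R.cubeEdge K ι w).image .inl)
  refine ⟨amalgamEmbedding hK l, c, fun e he heK => ?_⟩
  obtain ⟨x, rfl⟩ := exists_transversal he heK
  exact (congrArg χ (image_amalgamMap l x)).trans (hl x)

theorem exists_embedding_color_eq_of_parts_mem {C : Type*} [Finite C]
    (L : Finset (Finset (Fin T))) (P : PartiteHypergraph T k) :
    ∃ Q : PartiteHypergraph T k, ∀ χ : Finset Q.V → C, ∃ (f : Embedding P Q)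
      (c : Finset (Fin T) → C),
        ∀ e ∈ P.edges, P.parts e ∈ L → χ (e.image f.toFun) = c (P.parts e) := by
  classical
  induction L using Finset.induction_on with
  | empty => exact ⟨P, fun χ => ⟨.refl P, fun _ => χ ∅, fun e _ h => absurd h (notMem_empty _)⟩⟩
  | insert K L _ ih =>
    obtain ⟨Q', hQ'⟩ := ih
    obtain ⟨Q, hQ⟩ := exists_embedding_mono_of_parts_eq (C := C) Q' K
    refine ⟨Q, fun χ => ?_⟩
    obtain ⟨g, cK, hg⟩ := hQ χ
    obtain ⟨f, c, hf⟩ := hQ' fun s => χ (s.image g.toFun)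
    refine ⟨f.trans g, Function.update c K cK, fun e he heL => ?_⟩
    have himg : e.image (f.trans g).toFun = (e.image f.toFun).image g.toFun := by
      rw [image_image]
      rfl
    rw [himg]
    by_cases heK : P.parts e = K
    · rw [heK, Function.update_self]
      exact hg _ ((f.mem_edges_iff e).1 he) (by rw [f.parts_image, heK])
    · rw [Function.update_of_ne heK]
      exact hf e he ((mem_insert.1 heL).resolve_left heK)

section CopiesOn

variable {t : ℕ} {F : Finset (Finset (Fin t))}

abbrev copiesOn (hF : IsKUniform k F) (T : ℕ) : PartiteHypergraph T k where
  V := {S : Finset (Fin T) // #S = t} × Fin t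
  part p := p.1.1.orderEmbOfFin p.1.2 p.2
  edges := univ.biUnion fun S => F.image (image (S, ·))
  isKUniform := by
    intro e he
    simp only [mem_biUnion, mem_image] at he
    obtain ⟨S, -, e, he, rfl⟩ := he
    rw [card_image_of_injective _ (Prod.mk_right_injective S), hF e he]
  injOn_part := by
    intro e he
    simp only [mem_biUnion, mem_image] at he
    obtain ⟨S, -, e, -, rfl⟩ := he
    rw [coe_image]
    exact Set.InjOn.image_of_comp (S.1.orderEmbOfFin S.2).injective.injOn

variable {hF : IsKUniform k F}

variable (hF) in
def copyOn (S : {S : Finset (Fin T) // #S = t}) (i : Fin t) : (copiesOn hF T).V := (S, i)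

lemma copyOn_injective (S : {S : Finset (Fin T) // #S = t}) : Function.Injective (copyOn hF S) :=
  Prod.mk_right_injective S

lemma image_copyOn_mem_edges (S : {S : Finset (Fin T) // #S = t}) (s : Finset (Fin t)) :
    s.image (copyOn hF S) ∈ (copiesOn hF T).edges ↔ s ∈ F := by
  refine ⟨fun h => ?_, fun h => mem_biUnion.2 ⟨S, mem_univ _, mem_image_of_mem _ h⟩⟩
  obtain ⟨S', -, h⟩ := mem_biUnion.1 h
  obtain ⟨e, he, hes⟩ := mem_image.1 h
  have hes' := congrArg (image Prod.snd) hes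
  rw [image_image, image_image] at hes'
  exact (image_id.symm.trans (hes'.trans image_id)) ▸ he

lemma parts_image_copyOn (S : {S : Finset (Fin T) // #S = t}) (s : Finset (Fin t)) :
    (copiesOn hF T).parts (s.image (copyOn hF S)) = s.image (S.1.orderEmbOfFin S.2) := by
  rw [parts, image_image]
  rfl

end CopiesOn

theorem exists_induced_monochromatic_copy {t : ℕ} {F : Finset (Finset (Fin t))} (hk : 1 ≤ k)
    (hF : IsKUniform k F) (C : Type*) [Fintype C] :
    ∃ (T : ℕ) (Q : PartiteHypergraph T k), ∀ χ : Finset Q.V → C, ∃ (g : Fin t → Q.V) (c : C),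
      Function.Injective g ∧ (∀ s, s ∈ F ↔ s.image g ∈ Q.edges) ∧ ∀ e ∈ F, χ (e.image g) = c := by
  obtain ⟨T, hT⟩ := exists_bound_mono_subset C hk t
  obtain ⟨Q, hQ⟩ := exists_embedding_color_eq_of_parts_mem (C := C) univ (copiesOn hF T)
  refine ⟨T, Q, fun χ => ?_⟩
  obtain ⟨f, c, hc⟩ := hQ χ
  obtain ⟨S, -, hS, c₀, hc₀⟩ := hT (univ : Finset (Fin T)) c (by simp)
  refine ⟨f.toFun ∘ copyOn hF ⟨S, hS⟩, c₀, f.injective.comp (copyOn_injective _),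
    fun s => ?_, fun e he => ?_⟩
  · rw [← image_image, ← f.mem_edges_iff, image_copyOn_mem_edges]
  · rw [← image_image, hc _ ((image_copyOn_mem_edges _ e).2 he) (mem_univ _),
      parts_image_copyOn]
    refine hc₀ _ (image_subset_iff.2 fun i _ => orderEmbOfFin_mem S hS i) ?_
    rw [card_image_of_injective _ (S.orderEmbOfFin hS).injective, hF e he]

end PartiteHypergraph

theorem induced_ramsey_exists_general (k q t : ℕ) (hk : 2 ≤ k)
    (F : Finset (Finset (Fin t))) (hF : IsKUniform k F) :
    ∃ (n : ℕ) (G : Finset (Finset (Fin n))), IsKUniform k G ∧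
      ∀ χ : Finset (Fin n) → Fin q, HasIndMonoCopy k F G χ := by
  obtain ⟨T, Q, hQ⟩ := PartiteHypergraph.exists_induced_monochromatic_copy (by omega) hF (Fin q)
  let ε := Fintype.equivFin Q.V
  refine ⟨_, Q.edges.image (image ε), fun e he => ?_, fun χ => ?_⟩
  · obtain ⟨e, he', rfl⟩ := mem_image.1 he
    rw [card_image_of_injective _ ε.injective, Q.isKUniform e he']
  · obtain ⟨g, c, hg, hind, hmono⟩ := hQ fun s => χ (s.image ε)
    refine ⟨ε ∘ g, c, ε.injective.comp hg, fun s _ => ?_, fun e he => ?_⟩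
    · rw [hind, ← image_image, (image_injective ε.injective).mem_finset_image]
    · rw [← image_image]
      exact hmono e he

/-- For every `k ≥ 2`, every finite `k`-uniform hypergraph `F`
and every `q ≥ 2`, there exists a finite `k`-uniform hypergraph `G` such that
every `q`-coloring of the edges of `G` contains an induced monochromatic copy of
`F`; i.e. the induced Ramsey number `r_ind(F;q)` is finite. -/
theorem induced_ramsey_exists (k q t : ℕ) (hk : 2 ≤ k) (hq : 2 ≤ q)
    (F : Finset (Finset (Fin t))) (hF : IsKUniform k F) :
    ∃ (n : ℕ) (G : Finset (Finset (Fin n))), IsKUniform k G ∧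
      ∀ χ : Finset (Fin n) → Fin q, HasIndMonoCopy k F G χ :=
  induced_ramsey_exists_general k q t hk F hF
end

section
/- Let k ≥ 2 and let F be a k-uniform hypergraph with t vertices and ℓ ≥ 2 (distinct) edges, let n ≥ t, let H = H(F,n) be the auxiliary ℓ-uniform hypergraph of copies of F in [n], and set τ = n^{−1/(2ℓ)}. Then the codegree function satisfies δ(H,τ) ≤ 2^{binom(ℓ,2)} · t^t · n^{−1/2}. -/
open Finset
open scoped Classical

/-- The vertex set of the auxiliary hypergraph `H(F,n)`: all `k`-element
subsets of `[n] = {0, …, n-1}`. -/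
def auxVerts (k n : ℕ) : Finset (Finset ℕ) :=
  (Finset.range n).powersetCard k

/-- `E` forms a copy of `F`: there is a bijection from `V(F)` to `⋃_{e ∈ E} e`
mapping the edge set of `F` onto `E`. -/
def IsCopyEdge {t : ℕ} (F : Finset (Finset (Fin t))) (E : Finset (Finset ℕ)) : Prop :=
  ∃ f : Fin t → ℕ, Function.Injective f ∧
    Finset.univ.image f = E.sup id ∧ F.image (fun e => e.image f) = E

/-- The edge set of the auxiliary `ℓ`-uniform hypergraph `H(F,n)`: all
`ℓ`-element subsets of `V(H)` that form a copy of `F`, where `ℓ = e(F)`. -/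
noncomputable def auxEdges (k n : ℕ) {t : ℕ} (F : Finset (Finset (Fin t))) :
    Finset (Finset (Finset ℕ)) :=
  ((auxVerts k n).powerset).filter fun E => E.card = F.card ∧ IsCopyEdge F E

/-- The degree of a set `σ` of vertices in the hypergraph with edge set `H`:
the number of edges containing `σ`. -/
noncomputable def degSet {α : Type*} (H : Finset (Finset α)) (σ : Finset α) : ℕ :=
  (H.filter fun e => σ ⊆ e).card

/-- The average degree of the hypergraph with vertex set `V` and edge set `H`. -/
noncomputable def avgDeg {α : Type*} (V : Finset α) (H : Finset (Finset α)) : ℝ :=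
  (∑ v ∈ V, (degSet H {v} : ℝ)) / V.card

/-- `d^{(j)}(v)`: the maximum degree `d(σ)` over sets `σ ⊆ V` with `v ∈ σ` and
`|σ| = j`. -/
noncomputable def maxDeg {α : Type*} (V : Finset α) (H : Finset (Finset α))
    (j : ℕ) (v : α) : ℕ :=
  ((V.powersetCard j).filter fun σ => v ∈ σ).sup (degSet H)

/-- `δ_j`, defined by `δ_j τ^{j-1} N d = ∑_{v} d^{(j)}(v)`. -/
noncomputable def deltaJ {α : Type*} (V : Finset α) (H : Finset (Finset α))
    (τ : ℝ) (j : ℕ) : ℝ :=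
  (∑ v ∈ V, (maxDeg V H j v : ℝ)) / (τ ^ (j - 1) * V.card * avgDeg V H)

/-- The codegree function `δ(H,τ)` of an `ℓ`-uniform hypergraph with vertex set
`V` and edge set `H` (equal to `0` if the average degree vanishes). -/
noncomputable def codegFn {α : Type*} (V : Finset α) (H : Finset (Finset α))
    (ℓ : ℕ) (τ : ℝ) : ℝ :=
  if avgDeg V H = 0 then 0
  else (2 : ℝ) ^ ((Nat.choose ℓ 2 : ℝ) - 1) *
    ∑ j ∈ Finset.Icc 2 ℓ, (2 : ℝ) ^ (-(Nat.choose (j - 1) 2 : ℝ)) * deltaJ V H τ j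

/-!
Let `a` be the number of automorphisms of `F`. If `H(F,n)` has an edge at all, `F` has no isolated
vertex, and then every edge of `H(F,n)` is the image of `F` under exactly `a` embeddings
`[t] ↪ [n]`. Hence `a · e(H) = n (n-1) ⋯ (n-t+1)`, while for a set `σ` of at least two vertices of
`H` the two distinct `k`-sets in `σ` span `k+1` points that every such embedding must hit, so
`a · d(σ) ≤ t^{(k+1)} n^{t-k-1}`. Since `N d = ℓ e(H)` and `t ≤ kℓ`, this gives
`δ_j ≤ t^t / (n τ^{j-1}) ≤ t^t n^{-1/2}` for `j ≤ ℓ`, and `∑_j 2^{-binom(j-1,2)} ≤ 2`.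
-/

theorem Finset.card_eq_mul_card_of_maps_to {α β : Type*} [DecidableEq β] {f : α → β}
    {s : Finset α} {t : Finset β} (hf : ∀ a ∈ s, f a ∈ t) (c : ℕ)
    (hc : ∀ b ∈ t, #{a ∈ s | f a = b} = c) : #s = c * #t :=
  le_antisymm (card_le_mul_card_image_of_maps_to hf c fun b hb ↦ (hc b hb).le)
    (mul_card_image_le_card_of_maps_to hf c fun b hb ↦ (hc b hb).ge)

theorem Finset.lt_card_union_of_ne {α : Type*} [DecidableEq α] {k : ℕ} {x y : Finset α}
    (hx : #x = k) (hy : #y = k) (hxy : x ≠ y) : k < #(x ∪ y) := by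
  by_contra! h
  exact hxy <| (eq_of_subset_of_card_le subset_union_left (by omega)).trans
    (eq_of_subset_of_card_le subset_union_right (by omega)).symm

theorem Finset.sup_id_image_image {α β : Type*} [DecidableEq α] [DecidableEq β]
    (F : Finset (Finset α)) (f : α → β) : (F.image (image f)).sup id = (F.sup id).image f := by
  rw [sup_image, sup_eq_biUnion, sup_eq_biUnion, biUnion_image]
  rfl

theorem Fintype.card_filter_embedding_extends_le {α β γ : Type*} [Fintype α] [Fintype β]
    [Fintype γ] [DecidableEq β] (g : γ ↪ α) (w : γ → β) :
    #{φ : α ↪ β | ∀ c, φ (g c) = w c} ≤ card β ^ (card α - card γ) := by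
  have hcompl : card {a // a ∉ Set.range g} = card α - card γ := by
    rw [card_subtype_compl, Set.card_range_of_injective g.injective]
  rw [← hcompl, ← card_fun, ← card_univ]
  refine card_le_card_of_injOn (fun φ a ↦ φ a) (fun _ _ ↦ mem_univ _) ?_
  intro φ hφ ψ hψ hφψ
  simp only [coe_filter, mem_univ, true_and, Set.mem_ofPred_eq] at hφ hψ
  ext a
  by_cases ha : a ∈ Set.range g
  · obtain ⟨c, rfl⟩ := ha
    rw [hφ c, hψ c]
  · exact congrFun hφψ ⟨a, ha⟩

theorem Fintype.card_filter_embedding_subset_image_le {α β : Type*} [Fintype α] [Fintype β]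
    [DecidableEq β] (U : Finset β) :
    #{φ : α ↪ β | U ⊆ univ.image φ} ≤
      (card α).descFactorial #U * card β ^ (card α - #U) := by
  calc #{φ : α ↪ β | U ⊆ univ.image φ}
      ≤ #((univ : Finset (U ↪ α)).biUnion
          fun g ↦ {φ : α ↪ β | ∀ u, φ (g u) = u}) := by
        refine card_le_card fun φ hφ ↦ ?_
        simp only [mem_filter, mem_univ, true_and] at hφ
        have hpre : ∀ u : U, ∃ a, φ a = u := fun u ↦ by simpa using hφ u.2
        choose g hg using hpre
        have hg_inj : Function.Injective g := fun u v h ↦ Subtype.ext <| by rw [← hg u, ← hg v, h]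
        exact mem_biUnion.2 ⟨⟨g, hg_inj⟩, mem_univ _, by simpa using hg⟩
    _ ≤ card (U ↪ α) * card β ^ (card α - #U) := by
        refine card_biUnion_le_card_mul _ _ _ fun g _ ↦ ?_
        simpa using card_filter_embedding_extends_le g ((↑) : U → β)
    _ = (card α).descFactorial #U * card β ^ (card α - #U) := by
        rw [card_embedding_eq, card_coe]

theorem Nat.pow_le_pow_mul_descFactorial {n t k : ℕ} (htn : t ≤ n) :
    ∀ j, k + j ≤ t → n ^ j ≤ t ^ j * (n - k).descFactorial j
  | 0, _ => by simp
  | j + 1, h => by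
    have hn : n ≤ t * (n - k - j) := by
      obtain ⟨m, rfl⟩ := Nat.exists_eq_add_of_le htn
      have : m + 1 ≤ t + m - k - j := by omega
      nlinarith
    calc n ^ (j + 1) = n ^ j * n := pow_succ n j
      _ ≤ t ^ j * (n - k).descFactorial j * (t * (n - k - j)) :=
        Nat.mul_le_mul (pow_le_pow_mul_descFactorial htn j (by omega)) hn
      _ = t ^ (j + 1) * (n - k).descFactorial (j + 1) := by
        rw [Nat.descFactorial_succ]; ring

theorem Nat.choose_mul_descFactorial_mul_pow_le {k t ℓ n : ℕ} (hkt : k + 1 ≤ t) (htn : t ≤ n)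
    (htℓ : t ≤ k * ℓ) :
    n.choose k * (t.descFactorial (k + 1) * n ^ (t - (k + 1))) * n ≤
      ℓ * n.descFactorial t * t ^ t := by
  have hpow : n ^ (t - (k + 1)) * n = n ^ (t - k) := by rw [← pow_succ]; congr 1; omega
  have htt : t ^ (k + 1) * t ^ (t - k) = t * t ^ t := by rw [← pow_add, ← pow_succ']; congr 1; omega
  have hfact : t ≤ ℓ * k.factorial := by nlinarith [Nat.self_le_factorial k]
  have hsplit : n.descFactorial t = k.factorial * n.choose k * (n - k).descFactorial (t - k) := by
    rw [← descFactorial_mul_descFactorial (by omega : k ≤ t),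
      descFactorial_eq_factorial_mul_choose n k, mul_comm]
  calc n.choose k * (t.descFactorial (k + 1) * n ^ (t - (k + 1))) * n
      = n.choose k * t.descFactorial (k + 1) * n ^ (t - k) := by rw [← hpow]; ring
    _ ≤ n.choose k * t ^ (k + 1) * (t ^ (t - k) * (n - k).descFactorial (t - k)) := by
      gcongr
      · exact descFactorial_le_pow t (k + 1)
      · exact pow_le_pow_mul_descFactorial htn _ (by omega)
    _ = t * t ^ t * (n.choose k * (n - k).descFactorial (t - k)) := by rw [← htt]; ring
    _ = t * (n.choose k * (n - k).descFactorial (t - k) * t ^ t) := by ring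
    _ ≤ ℓ * k.factorial * (n.choose k * (n - k).descFactorial (t - k) * t ^ t) := by gcongr
    _ = ℓ * n.descFactorial t * t ^ t := by rw [hsplit]; ring

theorem Nat.le_choose_succ_two (i : ℕ) : i ≤ (i + 1).choose 2 := by
  rw [choose_succ_succ', choose_one_right]
  omega

theorem sum_Icc_two_rpow_neg_choose_le (ℓ : ℕ) :
    ∑ j ∈ Finset.Icc 2 ℓ, (2 : ℝ) ^ (-((j - 1).choose 2 : ℝ)) ≤ 2 := by
  rw [← Finset.Ico_add_one_right_eq_Icc, sum_Ico_eq_sum_range]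
  refine le_trans (sum_le_sum fun i _ ↦ ?_) (sum_geometric_two_le (ℓ + 1 - 2))
  rw [show 2 + i - 1 = i + 1 by omega]
  calc (2 : ℝ) ^ (-((i + 1).choose 2 : ℝ)) ≤ 2 ^ (-(i : ℝ)) :=
        Real.rpow_le_rpow_of_exponent_le one_le_two
          (neg_le_neg (mod_cast Nat.le_choose_succ_two i))
    _ = (1 / 2) ^ i := by rw [Real.rpow_neg zero_le_two, Real.rpow_natCast, one_div, inv_pow]

theorem inv_mul_rpow_pow_le {x : ℝ} (hx : 1 ≤ x) {i ℓ : ℕ} (hi : i ≤ ℓ) :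
    (x * (x ^ (-1 / (2 * ℓ) : ℝ)) ^ i)⁻¹ ≤ x ^ (-1 / 2 : ℝ) := by
  have hx0 : 0 < x := by linarith
  have hiℓ : (i : ℝ) / (2 * ℓ) ≤ 1 / 2 := by
    rcases Nat.eq_zero_or_pos ℓ with rfl | hℓ
    · simp [Nat.le_zero.1 hi]
    · rw [div_le_div_iff₀ (by positivity) two_pos]
      nlinarith [(Nat.cast_le (α := ℝ)).2 hi]
  have hexp : -1 / (2 * ℓ) * i = -((i : ℝ) / (2 * ℓ)) := by ring
  rw [← Real.rpow_natCast, ← Real.rpow_mul hx0.le, ← Real.rpow_one_add' hx0.le (by linarith),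
    ← Real.rpow_neg hx0.le]
  exact Real.rpow_le_rpow_of_exponent_le hx (by linarith)

theorem IsKUniform.succ_le_card_of_one_lt_card {V : Type*} [Fintype V] {k : ℕ}
    {F : Finset (Finset V)} (hF : IsKUniform k F) (h : 1 < #F) : k + 1 ≤ Fintype.card V := by
  obtain ⟨x, hx, y, hy, hxy⟩ := one_lt_card.1 h
  exact (lt_card_union_of_ne (hF x hx) (hF y hy) hxy).trans_le (card_le_univ _)

theorem IsKUniform.card_le_mul_card {V : Type*} [Fintype V] [DecidableEq V] {k : ℕ}
    {F : Finset (Finset V)} (hF : IsKUniform k F) (hcover : F.sup id = univ) :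
    Fintype.card V ≤ k * #F := by
  rw [← card_univ, ← hcover, sup_eq_biUnion, mul_comm]
  exact card_biUnion_le_card_mul _ _ _ fun e he ↦ (hF e he).le

section Hypergraph

variable {α : Type*} (V : Finset α) (H : Finset (Finset α))

theorem sum_degSet_singleton {ℓ : ℕ} (hsub : ∀ e ∈ H, e ⊆ V) (hcard : ∀ e ∈ H, #e = ℓ) :
    ∑ v ∈ V, degSet H {v} = ℓ * #H := by
  calc ∑ v ∈ V, degSet H {v} = ∑ v ∈ V, ∑ e ∈ H, if v ∈ e then 1 else 0 := by
        simp only [degSet, singleton_subset_iff, card_filter]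
    _ = ∑ e ∈ H, #e := by
        rw [sum_comm]
        refine sum_congr rfl fun e he ↦ ?_
        rw [← card_filter, filter_mem_eq_inter, inter_eq_right.2 (hsub e he)]
    _ = ℓ * #H := by rw [sum_congr rfl hcard, sum_const, smul_eq_mul, mul_comm]

theorem card_mul_avgDeg : (#V : ℝ) * avgDeg V H = ∑ v ∈ V, (degSet H {v} : ℝ) := by
  rcases V.eq_empty_or_nonempty with rfl | hV
  · simp
  · exact mul_div_cancel₀ _ (by exact_mod_cast hV.card_pos.ne')

theorem deltaJ_le_div {τ x c : ℝ} {j : ℕ} (hτ : 0 < τ) (hx : 0 < x) (hc : 0 ≤ c)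
    (h : (∑ v ∈ V, (maxDeg V H j v : ℝ)) * x ≤ c * ∑ v ∈ V, (degSet H {v} : ℝ)) :
    deltaJ V H τ j ≤ c / (x * τ ^ (j - 1)) := by
  rw [deltaJ, mul_assoc, card_mul_avgDeg]
  rcases (sum_nonneg fun v _ ↦ (degSet H {v}).cast_nonneg : (0 : ℝ) ≤ _).eq_or_lt
    with hD | hD
  · rw [← hD, mul_zero, div_zero]
    positivity
  · rw [div_le_div_iff₀ (by positivity) (by positivity)]
    calc (∑ v ∈ V, (maxDeg V H j v : ℝ)) * (x * τ ^ (j - 1))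
        = (∑ v ∈ V, (maxDeg V H j v : ℝ)) * x * τ ^ (j - 1) := by ring
      _ ≤ c * (∑ v ∈ V, (degSet H {v} : ℝ)) * τ ^ (j - 1) := by gcongr
      _ = c * (τ ^ (j - 1) * ∑ v ∈ V, (degSet H {v} : ℝ)) := by ring

theorem codegFn_le_of_deltaJ_le {ℓ : ℕ} {τ B : ℝ} (hB : 0 ≤ B)
    (h : ∀ j ∈ Finset.Icc 2 ℓ, deltaJ V H τ j ≤ B) :
    codegFn V H ℓ τ ≤ 2 ^ ℓ.choose 2 * B := by
  unfold codegFn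
  split_ifs
  · positivity
  calc (2 : ℝ) ^ ((ℓ.choose 2 : ℝ) - 1) *
        ∑ j ∈ Finset.Icc 2 ℓ, (2 : ℝ) ^ (-((j - 1).choose 2 : ℝ)) * deltaJ V H τ j
      ≤ 2 ^ ((ℓ.choose 2 : ℝ) - 1) * ((∑ j ∈ Finset.Icc 2 ℓ,
          (2 : ℝ) ^ (-((j - 1).choose 2 : ℝ))) * B) := by
        rw [sum_mul]
        gcongr with j hj
        exact h j hj
    _ ≤ 2 ^ ((ℓ.choose 2 : ℝ) - 1) * (2 * B) := by
        gcongr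
        exact sum_Icc_two_rpow_neg_choose_le ℓ
    _ = 2 ^ ℓ.choose 2 * B := by
        rw [Real.rpow_sub two_pos, Real.rpow_one, Real.rpow_natCast]
        field_simp

end Hypergraph

section AuxHypergraph

variable {k t n : ℕ} {F : Finset (Finset (Fin t))}

def copyOfEmb (F : Finset (Finset (Fin t))) (φ : Fin t ↪ Fin n) : Finset (Finset ℕ) :=
  F.image (image fun i ↦ (φ i : ℕ))

def autCard (F : Finset (Finset (Fin t))) : ℕ :=
  #{g : Equiv.Perm (Fin t) | F.image (image g) = F}

theorem autCard_pos : 0 < autCard F := by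
  have himage_id : (image id : Finset (Fin t) → Finset (Fin t)) = id := funext fun _ ↦ image_id
  exact card_pos.2 ⟨1, by simp [himage_id]⟩

theorem injective_val_comp (φ : Fin t ↪ Fin n) : Function.Injective fun i ↦ (φ i : ℕ) :=
  Fin.val_injective.comp φ.injective

theorem copyOfEmb_mem_auxEdges (hF : IsKUniform k F) (hcover : F.sup id = univ)
    (φ : Fin t ↪ Fin n) : copyOfEmb F φ ∈ auxEdges k n F := by
  have hinj := injective_val_comp φ
  refine mem_filter.2 ⟨mem_powerset.2 fun x hx ↦ ?_, card_image_of_injective _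
    (image_injective hinj), _, hinj, by rw [copyOfEmb, sup_id_image_image, hcover], rfl⟩
  obtain ⟨e, he, rfl⟩ := mem_image.1 hx
  refine mem_powersetCard.2 ⟨fun _ hi ↦ ?_, by rw [card_image_of_injective _ hinj, hF e he]⟩
  obtain ⟨i, -, rfl⟩ := mem_image.1 hi
  exact mem_range.2 (φ i).isLt

theorem exists_copyOfEmb_eq {E : Finset (Finset ℕ)} (hE : E ∈ auxEdges k n F) :
    ∃ φ : Fin t ↪ Fin n, copyOfEmb F φ = E := by
  obtain ⟨hEV, -, f, hf, hsup, rfl⟩ := mem_filter.1 hE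
  have hlt : ∀ i, f i < n := by
    intro i
    obtain ⟨e, he, hie⟩ := mem_sup.1 (hsup ▸ mem_image_of_mem f (mem_univ i))
    exact mem_range.1 ((mem_powersetCard.1 (mem_powerset.1 hEV he)).1 hie)
  exact ⟨⟨fun i ↦ ⟨f i, hlt i⟩, fun i j h ↦ hf (congrArg Fin.val h)⟩, rfl⟩

theorem sup_eq_univ_of_mem_auxEdges {E : Finset (Finset ℕ)} (hE : E ∈ auxEdges k n F) :
    F.sup id = univ := by
  obtain ⟨-, -, f, hf, hsup, rfl⟩ := mem_filter.1 hE
  exact image_injective hf (by rw [hsup, sup_id_image_image])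

theorem copyOfEmb_trans (g : Equiv.Perm (Fin t)) (φ : Fin t ↪ Fin n) :
    copyOfEmb F (g.toEmbedding.trans φ) = copyOfEmb (F.image (image g)) φ := by
  simp only [copyOfEmb, image_image]
  congr 1
  funext e
  simp [image_image, Function.comp_def]

theorem card_filter_copyOfEmb_eq (hcover : F.sup id = univ) (φ₀ : Fin t ↪ Fin n) :
    #{φ : Fin t ↪ Fin n | copyOfEmb F φ = copyOfEmb F φ₀} = autCard F := by
  have hcopy_inj : Function.Injective fun X : Finset (Finset (Fin t)) ↦ copyOfEmb X φ₀ :=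
    image_injective (image_injective (injective_val_comp φ₀))
  refine (card_bij (fun g _ ↦ g.toEmbedding.trans φ₀) (fun g hg ↦ ?_) (fun g₁ _ g₂ _ h ↦ ?_)
    (fun φ hφ ↦ ?_)).symm
  · simp only [mem_filter, mem_univ, true_and] at hg ⊢
    rw [copyOfEmb_trans, hg]
  · ext i
    exact congrArg Fin.val (φ₀.injective (DFunLike.congr_fun h i))
  · simp only [mem_filter, mem_univ, true_and] at hφ ⊢
    have hrange : Set.range φ = Set.range φ₀ := by
      have h := congrArg (·.sup id) hφ
      simp only [copyOfEmb, sup_id_image_image, hcover] at h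
      ext a
      simpa [Fin.val_inj] using congrArg ((a : ℕ) ∈ ·) h
    let g : Equiv.Perm (Fin t) := (Equiv.ofInjective φ φ.injective).trans
      ((Equiv.setCongr hrange).trans (Equiv.ofInjective φ₀ φ₀.injective).symm)
    have hg : g.toEmbedding.trans φ₀ = φ := by
      ext i
      simp [g, Equiv.apply_ofInjective_symm]
    exact ⟨g, hcopy_inj (by dsimp only; rw [← copyOfEmb_trans, hg, hφ]), hg⟩

theorem autCard_mul_degSet (hF : IsKUniform k F) (hcover : F.sup id = univ)
    (σ : Finset (Finset ℕ)) :
    autCard F * degSet (auxEdges k n F) σ = #{φ : Fin t ↪ Fin n | σ ⊆ copyOfEmb F φ} := by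
  have hfiber : #{φ : Fin t ↪ Fin n | σ ⊆ copyOfEmb F φ} =
      autCard F * #{E ∈ auxEdges k n F | σ ⊆ E} :=
    card_eq_mul_card_of_maps_to (f := copyOfEmb F) (fun φ hφ ↦ ?_) _ fun E hE ↦ ?_
  · -- `degSet` was elaborated with classical decidability instances
    rw [hfiber, degSet]
    convert rfl
  · exact mem_filter.2 ⟨copyOfEmb_mem_auxEdges hF hcover φ, (mem_filter.1 hφ).2⟩
  · obtain ⟨hE, hσE⟩ := mem_filter.1 hE
    obtain ⟨φ₀, rfl⟩ := exists_copyOfEmb_eq hE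
    rw [filter_filter, ← card_filter_copyOfEmb_eq hcover φ₀]
    congr 1
    exact filter_congr fun φ _ ↦ and_iff_right_of_imp fun h ↦ h ▸ hσE

theorem autCard_mul_card_auxEdges (hF : IsKUniform k F) (hcover : F.sup id = univ) :
    autCard F * #(auxEdges k n F) = n.descFactorial t := by
  simpa [degSet, Fintype.card_embedding_eq] using autCard_mul_degSet (n := n) hF hcover ∅

theorem autCard_mul_degSet_le (hF : IsKUniform k F) (hcover : F.sup id = univ)
    {σ : Finset (Finset ℕ)} (hσV : σ ⊆ auxVerts k n) (hσ : 2 ≤ #σ) :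
    autCard F * degSet (auxEdges k n F) σ ≤ t.descFactorial (k + 1) * n ^ (t - (k + 1)) := by
  obtain ⟨x, hx, y, hy, hxy⟩ := one_lt_card.1 hσ
  obtain ⟨hxn, hxk⟩ := mem_powersetCard.1 (hσV hx)
  obtain ⟨hyn, hyk⟩ := mem_powersetCard.1 (hσV hy)
  set W := (x ∪ y).preimage Fin.val Fin.val_injective.injOn
  have hW : k + 1 ≤ #W := by
    rw [card_preimage, filter_true_of_mem fun a ha ↦ ?_]
    · exact lt_card_union_of_ne hxk hyk hxy
    · have : a < n := mem_range.1 (union_subset hxn hyn ha)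
      exact ⟨⟨a, this⟩, rfl⟩
  obtain ⟨U, hUW, hU⟩ := exists_subset_card_eq hW
  rw [autCard_mul_degSet hF hcover]
  calc #{φ : Fin t ↪ Fin n | σ ⊆ copyOfEmb F φ}
      ≤ #{φ : Fin t ↪ Fin n | U ⊆ univ.image φ} := by
        refine card_le_card fun φ hφ ↦ mem_filter.2 ⟨mem_univ _, fun a ha ↦ ?_⟩
        have hσφ := (mem_filter.1 hφ).2
        have hsub : x ∪ y ⊆ (copyOfEmb F φ).sup id :=
          union_subset (le_sup (f := id) (hσφ hx)) (le_sup (f := id) (hσφ hy))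
        rw [copyOfEmb, sup_id_image_image, hcover] at hsub
        obtain ⟨i, -, hi⟩ := mem_image.1 (hsub (mem_preimage.1 (hUW ha)))
        exact mem_image.2 ⟨i, mem_univ _, Fin.ext hi⟩
    _ ≤ t.descFactorial (k + 1) * n ^ (t - (k + 1)) := by
        simpa [hU] using Fintype.card_filter_embedding_subset_image_le (α := Fin t) U

theorem sum_maxDeg_mul_le (hF : IsKUniform k F) (hF2 : 1 < #F) (htn : t ≤ n) {j : ℕ}
    (hj : 2 ≤ j) :
    (∑ v ∈ auxVerts k n, maxDeg (auxVerts k n) (auxEdges k n F) j v) * n ≤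
      t ^ t * ∑ v ∈ auxVerts k n, degSet (auxEdges k n F) {v} := by
  rcases (auxEdges k n F).eq_empty_or_nonempty with hH | ⟨E, hE⟩
  · simp [maxDeg, degSet, hH]
  have hcover := sup_eq_univ_of_mem_auxEdges hE
  have hkt : k + 1 ≤ t := by simpa using hF.succ_le_card_of_one_lt_card hF2
  have htk : t ≤ k * #F := by simpa using hF.card_le_mul_card hcover
  set a := autCard F
  set B := t.descFactorial (k + 1) * n ^ (t - (k + 1))
  have hmaxDeg : ∀ v, a * maxDeg (auxVerts k n) (auxEdges k n F) j v ≤ B := by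
    intro v
    rw [mul_comm, ← Nat.le_div_iff_mul_le autCard_pos]
    refine Finset.sup_le fun σ hσ ↦ (Nat.le_div_iff_mul_le autCard_pos).2 ?_
    simp only [mem_filter, mem_powersetCard] at hσ
    obtain ⟨⟨hσV, hσj⟩, -⟩ := hσ
    rw [mul_comm]
    exact autCard_mul_degSet_le hF hcover hσV (hσj ▸ hj)
  have hdeg : ∑ v ∈ auxVerts k n, degSet (auxEdges k n F) {v} = #F * #(auxEdges k n F) :=
    sum_degSet_singleton _ _ (fun e he ↦ mem_powerset.1 (mem_filter.1 he).1)
      fun e he ↦ (mem_filter.1 he).2.1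
  refine Nat.le_of_mul_le_mul_left ?_ (autCard_pos (F := F))
  calc a * ((∑ v ∈ auxVerts k n, maxDeg (auxVerts k n) (auxEdges k n F) j v) * n)
      = (∑ v ∈ auxVerts k n, a * maxDeg (auxVerts k n) (auxEdges k n F) j v) * n := by
        rw [← mul_assoc, mul_sum]
    _ ≤ n.choose k * B * n := by
        gcongr
        exact (sum_le_card_nsmul _ _ _ fun v _ ↦ hmaxDeg v).trans_eq (by simp [auxVerts])
    _ ≤ #F * n.descFactorial t * t ^ t := Nat.choose_mul_descFactorial_mul_pow_le hkt htn htk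
    _ = a * (t ^ t * ∑ v ∈ auxVerts k n, degSet (auxEdges k n F) {v}) := by
        rw [hdeg, ← autCard_mul_card_auxEdges hF hcover]; ring

end AuxHypergraph

theorem aux_codegree_bound_general (k t ℓ n : ℕ)
    (F : Finset (Finset (Fin t))) (hF : IsKUniform k F) (hℓ : F.card = ℓ)
    (hℓ2 : 2 ≤ ℓ) (hn : t ≤ n) :
    codegFn (auxVerts k n) (auxEdges k n F) ℓ ((n : ℝ) ^ (-(1 : ℝ) / (2 * ℓ))) ≤
      (2 : ℝ) ^ (Nat.choose ℓ 2) * (t : ℝ) ^ t * (n : ℝ) ^ (-(1 : ℝ) / 2) := by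
  have hn0 : 0 < n := by
    have ht := hF.succ_le_card_of_one_lt_card (by omega)
    rw [Fintype.card_fin] at ht
    omega
  rw [mul_assoc]
  refine codegFn_le_of_deltaJ_le _ _ (by positivity) fun j hj ↦ ?_
  obtain ⟨hj2, hjℓ⟩ := mem_Icc.1 hj
  calc deltaJ (auxVerts k n) (auxEdges k n F) ((n : ℝ) ^ (-(1 : ℝ) / (2 * ℓ))) j
      ≤ (t : ℝ) ^ t / (n * ((n : ℝ) ^ (-(1 : ℝ) / (2 * ℓ))) ^ (j - 1)) :=
        deltaJ_le_div _ _ (by positivity) (by positivity) (by positivity)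
          (mod_cast sum_maxDeg_mul_le hF (by omega) hn hj2)
    _ ≤ (t : ℝ) ^ t * (n : ℝ) ^ (-(1 : ℝ) / 2) := by
        rw [div_eq_mul_inv]
        gcongr
        exact inv_mul_rpow_pow_le (mod_cast hn0) (by omega)

/-- For `k ≥ 2`, a `k`-uniform hypergraph `F` with `t` vertices
and `ℓ ≥ 2` edges, `n ≥ t` and `τ = n^{-1/(2ℓ)}`, the codegree function of the
auxiliary hypergraph `H(F,n)` satisfies
`δ(H,τ) ≤ 2^{binom(ℓ,2)} t^t n^{-1/2}`. -/
theorem aux_codegree_bound (k t ℓ n : ℕ) (hk : 2 ≤ k)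
    (F : Finset (Finset (Fin t))) (hF : IsKUniform k F) (hℓ : F.card = ℓ)
    (hℓ2 : 2 ≤ ℓ) (hn : t ≤ n) :
    codegFn (auxVerts k n) (auxEdges k n F) ℓ ((n : ℝ) ^ (-(1 : ℝ) / (2 * ℓ))) ≤
      (2 : ℝ) ^ (Nat.choose ℓ 2) * (t : ℝ) ^ t * (n : ℝ) ^ (-(1 : ℝ) / 2) :=
  aux_codegree_bound_general k t ℓ n F hF hℓ hℓ2 hn
end
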